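/- Let n ≥ 4 be an even integer and Λ = Cay(D_{2n}, Ψ) with Ψ = {b, ab, ..., a^{n-1}b} ∪ {a^{n/2}}. No set of vertices of cardinality less than n is a resolving set of Λ; hence the metric dimension of Λ equals n. -/

import Mathlib

/-- The Cayley graph of a group with connection set `S`. -/
def cayley {G : Type*} [Group G] (S : Set G) : SimpleGraph G :=
  SimpleGraph.fromRel (fun x y => x⁻¹ * y ∈ S)

/-- The connection set `Ψ = {b, ab, …, a^{n-1}b} ∪ {a^{n/2}}` in the dihedral group. -/
def Psi (n : ℕ) : Set (DihedralGroup n) :=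
  {x | ∃ i : ZMod n, x = DihedralGroup.sr i} ∪ {DihedralGroup.r ((n / 2 : ℕ) : ZMod n)}
/-- `R` is a resolving set of `G`: distinct vertices are distinguished by distances to `R`. -/
def IsResolvingSet {V : Type*} (G : SimpleGraph V) (R : Set V) : Prop :=
  ∀ u v : V, u ≠ v → ∃ r ∈ R, G.dist u r ≠ G.dist v r

/-!
Write `a = r 1` and `z = a^{n/2}`. For `x ≠ y` the distance from `x` to `y` in `Λ` is `1` if
`x⁻¹y ∈ Ψ` and `2` otherwise, since a reflection is then a common neighbour. As
`zΨ ∖ {1, z} = Ψ ∖ {1, z}`, the vertices `x` and `xz` are twins: no third vertex distinguishes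
them. Hence a resolving set meets each of the `n` pairs `{x, xz}` and has at least `n` elements.
Conversely, every set meeting all these pairs is resolving: `u` is separated from `v = ug` by the
pair `{u, uz}` when `g` is a rotation, and by `{ua, uaz}`, at distance `2` from `u` and `1` from
`v`, when `g` is a reflection. The set `{r i, sr i : i < n/2}` meets each pair exactly once.
-/

open DihedralGroup SimpleGraph

theorem SimpleGraph.dist_eq_two_of_not_adj {V : Type*} {G : SimpleGraph V} {u v w : V}
    (huv : u ≠ v) (hnadj : ¬G.Adj u v) (hu : G.Adj u w) (hv : G.Adj v w) : G.dist u v = 2 := by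
  rw [dist, edist_eq_two_iff.mpr ⟨huv, hnadj, w, G.mem_commonNeighbors.mpr ⟨hu, hv⟩⟩]
  rfl

theorem IsResolvingSet.mem_or_mem_of_twins {V : Type*} {G : SimpleGraph V} {R : Set V} {u v : V}
    (hR : IsResolvingSet G R) (huv : u ≠ v)
    (htwin : ∀ w, w ≠ u → w ≠ v → G.dist u w = G.dist v w) : u ∈ R ∨ v ∈ R := by
  by_contra! h
  obtain ⟨w, hw, hne⟩ := hR u v huv
  exact hne (htwin w (fun e => h.1 (e ▸ hw)) (fun e => h.2 (e ▸ hw)))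

namespace Function.Involutive

variable {α : Type*} [Finite α] {σ : α → α} {R : Set α}

theorem card_le_two_mul_ncard (hσ : Involutive σ) (hR : ∀ x, x ∈ R ∨ σ x ∈ R) :
    Nat.card α ≤ 2 * R.ncard := by
  have hcover : Set.univ ⊆ R ∪ σ '' R := fun x _ => (hR x).imp id fun h => ⟨σ x, h, hσ x⟩
  calc Nat.card α = (Set.univ : Set α).ncard := (Set.ncard_univ α).symm
    _ ≤ (R ∪ σ '' R).ncard := Set.ncard_le_ncard hcover
    _ ≤ R.ncard + (σ '' R).ncard := Set.ncard_union_le _ _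
    _ ≤ 2 * R.ncard := by linarith [Set.ncard_image_le (f := σ) (s := R)]

theorem card_eq_two_mul_ncard (hσ : Involutive σ) (hR : ∀ x, x ∈ R ↔ σ x ∉ R) :
    Nat.card α = 2 * R.ncard := by
  have himage : σ '' R = Rᶜ := by
    ext x
    rw [hσ.image_eq_preimage_symm, Set.mem_preimage, Set.mem_compl_iff, hR x, not_not]
  rw [← Set.ncard_add_ncard_compl R, ← himage, Set.ncard_image_of_injective R hσ.injective]
  ring

end Function.Involutive

theorem cayley_adj_iff {G : Type*} [Group G] {S : Set G} (hS : ∀ g ∈ S, g⁻¹ ∈ S)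
    {x y : G} :
    (cayley S).Adj x y ↔ x ≠ y ∧ x⁻¹ * y ∈ S := by
  rw [cayley, fromRel_adj]
  refine and_congr_right fun _ => or_iff_left_of_imp fun h => ?_
  simpa using hS _ h

theorem ZMod.natCast_ne_natCast_of_lt {n a b : ℕ} (ha : a < n) (hb : b < n) (hab : a ≠ b) :
    (a : ZMod n) ≠ b := by
  rwa [Ne, ZMod.natCast_eq_natCast_iff', Nat.mod_eq_of_lt ha, Nat.mod_eq_of_lt hb]

namespace DihedralGroup

variable {n : ℕ}

def half (n : ℕ) : ZMod n := ((n / 2 : ℕ) : ZMod n)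

theorem half_add_half (hev : Even n) : half n + half n = 0 := by
  obtain ⟨k, rfl⟩ := hev
  rw [half, show (k + k) / 2 = k by omega, ← Nat.cast_add, ZMod.natCast_self]

theorem neg_half (hev : Even n) : -half n = half n :=
  neg_eq_of_add_eq_zero_left (half_add_half hev)

theorem half_ne_zero (hn : 2 ≤ n) : half n ≠ 0 := by
  simpa [half] using
    ZMod.natCast_ne_natCast_of_lt (n := n) (a := n / 2) (b := 0) (by omega) (by omega) (by omega)

theorem one_ne_half (hn : 4 ≤ n) : (1 : ZMod n) ≠ half n := by
  simpa [half] using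
    ZMod.natCast_ne_natCast_of_lt (n := n) (a := 1) (b := n / 2) (by omega) (by omega) (by omega)

@[simp]
theorem r_eq_one_iff {k : ZMod n} : r k = 1 ↔ k = 0 := by
  rw [← r_zero]; exact ⟨r.inj, congrArg r⟩

@[simp]
theorem sr_ne_one (k : ZMod n) : sr k ≠ 1 := nofun

@[simp]
theorem sr_mem_Psi (k : ZMod n) : sr k ∈ Psi n := Or.inl ⟨k, rfl⟩

@[simp]
theorem r_mem_Psi_iff {k : ZMod n} : r k ∈ Psi n ↔ k = half n := by
  simp [Psi, half]

theorem inv_mem_Psi (hev : Even n) : ∀ g ∈ Psi n, g⁻¹ ∈ Psi n := by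
  intro g hg
  cases g with
  | r k => simp_all [neg_half hev]
  | sr k => simp

open Classical in
theorem dist_cayley_Psi (hev : Even n) (x y : DihedralGroup n) :
    (cayley (Psi n)).dist x y = if x = y then 0 else if x⁻¹ * y ∈ Psi n then 1 else 2 := by
  have hadj := fun {x y : DihedralGroup n} => cayley_adj_iff (x := x) (y := y) (inv_mem_Psi hev)
  split_ifs with hxy hmem
  · rw [hxy, dist_self]
  · exact dist_eq_one_iff_adj.mpr (hadj.mpr ⟨hxy, hmem⟩)
  · obtain ⟨k, hk⟩ : ∃ k, x⁻¹ * y = r k := by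
      cases h : x⁻¹ * y with
      | r k => exact ⟨k, rfl⟩
      | sr k => exact absurd (h ▸ sr_mem_Psi k) hmem
    refine dist_eq_two_of_not_adj hxy (fun h => hmem (hadj.mp h).2) (w := x * sr 0) ?_ ?_
    · exact hadj.mpr ⟨by simp, by simp⟩
    · refine (hadj.mpr ⟨fun h => hmem (by simp [← h]), ?_⟩).symm
      simp [mul_assoc, hk]

def halfTurn (n : ℕ) : DihedralGroup n := r (half n)

theorem halfTurn_mul_self (hev : Even n) : halfTurn n * halfTurn n = 1 := by
  simp [halfTurn, half_add_half hev]

theorem dist_mul_halfTurn (hev : Even n) {x w : DihedralGroup n} (hw : w ≠ x)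
    (hw' : w ≠ x * halfTurn n) :
    (cayley (Psi n)).dist (x * halfTurn n) w = (cayley (Psi n)).dist x w := by
  obtain ⟨g, rfl⟩ : ∃ g, w = x * g := ⟨x⁻¹ * w, by group⟩
  cases g with
  | r k =>
    simp_all [dist_cayley_Psi hev, halfTurn, mul_assoc, neg_half hev, eq_comm (a := half n)]
  | sr k => simp_all [dist_cayley_Psi hev, halfTurn, mul_assoc]

theorem exists_dist_ne (hn : 4 ≤ n) (hev : Even n) {u v : DihedralGroup n} (huv : u ≠ v) :
    ∃ a, ∀ w ∈ ({u * a, u * a * halfTurn n} : Set (DihedralGroup n)),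
      (cayley (Psi n)).dist u w ≠ (cayley (Psi n)).dist v w := by
  obtain ⟨g, rfl⟩ : ∃ g, v = u * g := ⟨u⁻¹ * v, by group⟩
  cases g with
  | r k =>
    refine ⟨1, ?_⟩
    simp_all [dist_cayley_Psi hev, halfTurn, neg_eq_iff_eq_neg, neg_half hev,
      half_ne_zero (by omega : 2 ≤ n)]
    split_ifs <;> simp
  | sr k =>
    have : Fact (1 < n) := ⟨by omega⟩
    refine ⟨r 1, ?_⟩
    simp [dist_cayley_Psi hev, halfTurn, mul_assoc, add_eq_zero_iff_eq_neg, neg_half hev,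
      one_ne_half hn]

theorem isResolvingSet_of_forall_mem_or_mem (hn : 4 ≤ n) (hev : Even n)
    {R : Set (DihedralGroup n)} (hR : ∀ x, x ∈ R ∨ x * halfTurn n ∈ R) :
    IsResolvingSet (cayley (Psi n)) R := by
  intro u v huv
  obtain ⟨a, ha⟩ := exists_dist_ne hn hev huv
  rcases hR (u * a) with h | h
  · exact ⟨_, h, ha _ (Or.inl rfl)⟩
  · exact ⟨_, h, ha _ (Or.inr rfl)⟩

theorem _root_.IsResolvingSet.mem_or_mul_halfTurn_mem (hn : 2 ≤ n) (hev : Even n)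
    {R : Set (DihedralGroup n)} (hR : IsResolvingSet (cayley (Psi n)) R) (x : DihedralGroup n) :
    x ∈ R ∨ x * halfTurn n ∈ R :=
  hR.mem_or_mem_of_twins (by simpa [halfTurn] using half_ne_zero hn)
    fun _ hw hw' => (dist_mul_halfTurn hev hw hw').symm

theorem val_add_half_lt_iff [NeZero n] (hev : Even n) (i : ZMod n) :
    (i + half n).val < n / 2 ↔ ¬i.val < n / 2 := by
  have hi := i.val_lt
  have hhalf : (half n).val = n / 2 :=
    ZMod.val_cast_of_lt (Nat.div_lt_self (NeZero.pos n) one_lt_two)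
  obtain ⟨k, rfl⟩ := hev
  rw [ZMod.val_add, hhalf]
  by_cases h : i.val < (k + k) / 2
  · rw [Nat.mod_eq_of_lt (by omega)]; omega
  · rw [Nat.mod_eq_sub_mod (by omega), Nat.mod_eq_of_lt (by omega)]; omega

def halfSet (n : ℕ) : Set (DihedralGroup n) :=
  {x | ∃ i : ZMod n, i.val < n / 2 ∧ (x = r i ∨ x = sr i)}

theorem mem_halfSet_iff_mul_halfTurn_notMem [NeZero n] (hev : Even n) (x : DihedralGroup n) :
    x ∈ halfSet n ↔ x * halfTurn n ∉ halfSet n := by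
  cases x <;> simp [halfSet, halfTurn, val_add_half_lt_iff hev]

end DihedralGroup

theorem cayley_metric_dimension (n : ℕ) (hn : 4 ≤ n) (hev : Even n) :
    (∀ R : Set (DihedralGroup n), R.ncard < n → ¬ IsResolvingSet (cayley (Psi n)) R) ∧
    IsLeast {m : ℕ | ∃ R : Set (DihedralGroup n),
      R.ncard = m ∧ IsResolvingSet (cayley (Psi n)) R} n := by
  have : NeZero n := ⟨by omega⟩
  have hσ : Function.Involutive (· * halfTurn n) := fun x => by
    simp [mul_assoc, halfTurn_mul_self hev]
  have lower (R : Set (DihedralGroup n)) (hR : R.ncard < n) :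
      ¬IsResolvingSet (cayley (Psi n)) R := fun hres => by
    have := hσ.card_le_two_mul_ncard (hres.mem_or_mul_halfTurn_mem (by omega) hev)
    rw [nat_card] at this
    omega
  refine ⟨lower, ⟨halfSet n, ?_, isResolvingSet_of_forall_mem_or_mem hn hev fun x => ?_⟩,
    fun m ⟨R, hRm, hR⟩ => not_lt.mp fun hm => lower R (hRm ▸ hm) hR⟩
  · have := hσ.card_eq_two_mul_ncard (mem_halfSet_iff_mul_halfTurn_notMem hev)
    rw [nat_card] at this
    omega
  · have := mem_halfSet_iff_mul_halfTurn_notMem hev x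
    tauto
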